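/- arXiv:1505.03645 — 2 statements merged into one kernel-verified Lean document; each statement's English description precedes it below -/
import Mathlib

section
/- For all μ, λ ∈ ℝ, as z → 0 from the left one has Δ(μ,λ;z) = B₀ (μλ + μ + λ)(−z)^{−1/2} + (1 − λ − μλ) + O((−z)^{1/2}) with the constant B₀ = 1/√2 > 0; i.e. the function z ↦ Δ(μ,λ;z) − B₀(μλ+μ+λ)(−z)^{−1/2} − (1−λ−μλ) is O((−z)^{1/2}) along left neighborhoods of 0. -/
open MeasureTheory Real Filter Topology Asymptotics

/-- `a(z) = (1/2π)∫_{−π}^{π} dq/(z − 1 + cos q)`. -/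
noncomputable def aF (z : ℝ) : ℝ :=
  (2 * Real.pi)⁻¹ * ∫ q in (-Real.pi)..Real.pi, (z - 1 + Real.cos q)⁻¹

/-- `b(z) = −(1/2π)∫_{−π}^{π} cos q dq/(z − 1 + cos q)`. -/
noncomputable def bF (z : ℝ) : ℝ :=
  -((2 * Real.pi)⁻¹ * ∫ q in (-Real.pi)..Real.pi, Real.cos q / (z - 1 + Real.cos q))

/-- `c(z) = (1/2π)∫_{−π}^{π} cos² q dq/(z − 1 + cos q)`. -/
noncomputable def cF (z : ℝ) : ℝ :=
  (2 * Real.pi)⁻¹ * ∫ q in (-Real.pi)..Real.pi, (Real.cos q) ^ 2 / (z - 1 + Real.cos q)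

/-- The Fredholm determinant `Δ(μ,λ;z) = (1 − μ a(z))(1 − λ c(z)) − μλ b(z)²`. -/
noncomputable def Δdet (μ lam z : ℝ) : ℝ :=
  (1 - μ * aF z) * (1 - lam * cF z) - μ * lam * (bF z) ^ 2

/-!
For `z < 0` the three integrals reduce to `∫ (1 - z - cos q)⁻¹ = 2π / √(-z (2 - z))`,
computed with the antiderivative `arctan (k tan (q / 2))` (Weierstrass substitution).
The `a(z)²` terms of `Δ` cancel, so `Δ = P(z) + Q(z) / (√(-z) √(2 - z))` with polynomials
`P`, `Q`; the expansion at `0⁻` then follows from `P(0) = 1 - λ - μλ`, `Q(0) = μλ + μ + λ`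
and the smoothness of `Q(z) / √(2 - z)` at `0`.
-/

open Set

lemma hasDerivAt_arctan_mul_tan_half {a q : ℝ} (ha : 1 < a) (hq : cos (q / 2) ≠ 0) :
    HasDerivAt (fun q => 2 / √(a ^ 2 - 1) * arctan (√((a + 1) / (a - 1)) * tan (q / 2)))
      (a - cos q)⁻¹ q := by
  set k := √((a + 1) / (a - 1))
  have hk : k ^ 2 = (a + 1) / (a - 1) := sq_sqrt (div_nonneg (by linarith) (by linarith))
  have hs : √(a ^ 2 - 1) = k * (a - 1) := by
    rw [show a ^ 2 - 1 = (a + 1) / (a - 1) * (a - 1) ^ 2 by field_simp; ring,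
      sqrt_mul (div_nonneg (by linarith) (by linarith)), sqrt_sq (by linarith)]
  have htan := ((hasDerivAt_tan hq).comp q ((hasDerivAt_id q).div_const 2)).const_mul k
  refine (((hasDerivAt_arctan _).comp q htan).const_mul (2 / √(a ^ 2 - 1))).congr_deriv ?_
  have hk0 : k ≠ 0 := (sqrt_pos.2 (div_pos (by linarith) (by linarith))).ne'
  have hcos : cos q = cos (q / 2) ^ 2 - sin (q / 2) ^ 2 := by
    rw [← cos_two_mul']; ring_nf
  have hdenom : a - cos q ≠ 0 := by linarith [cos_le_one q]
  simp only [Function.comp_apply, id]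
  rw [hs, tan_eq_sin_div_cos]
  field_simp
  have ha1 : a - 1 ≠ 0 := by linarith
  rw [hcos, hk]
  field_simp
  linear_combination (-a) * sin_sq_add_cos_sq (q / 2)

lemma tendsto_arctan_mul_tan_half_nhdsLT_pi {k : ℝ} (hk : 0 < k) :
    Tendsto (fun q => arctan (k * tan (q / 2))) (𝓝[<] π) (𝓝 (π / 2)) := by
  have hhalf : Tendsto (· / 2) (𝓝[<] π) (𝓝[<] (π / 2)) :=
    tendsto_nhdsWithin_iff.2 ⟨(tendsto_id.div_const 2).mono_left nhdsWithin_le_nhds,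
      eventually_nhdsWithin_of_forall fun q (hq : q < π) => by simp only [mem_Iio]; linarith⟩
  exact (tendsto_arctan_atTop.mono_right nhdsWithin_le_nhds).comp
    ((tendsto_tan_pi_div_two.comp hhalf).const_mul_atTop hk)

lemma tendsto_arctan_mul_tan_half_nhdsGT_neg_pi {k : ℝ} (hk : 0 < k) :
    Tendsto (fun q => arctan (k * tan (q / 2))) (𝓝[>] (-π)) (𝓝 (-(π / 2))) := by
  have hhalf : Tendsto (· / 2) (𝓝[>] (-π)) (𝓝[>] (-(π / 2))) :=
    tendsto_nhdsWithin_iff.2 ⟨by simpa [neg_div] using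
        (tendsto_id (x := 𝓝 (-π))).div_const 2 |>.mono_left nhdsWithin_le_nhds,
      eventually_nhdsWithin_of_forall fun q (hq : -π < q) => by simp only [mem_Ioi]; linarith⟩
  exact (tendsto_arctan_atBot.mono_right nhdsWithin_le_nhds).comp
    ((tendsto_tan_neg_pi_div_two.comp hhalf).const_mul_atBot hk)

lemma integral_inv_sub_cos {a : ℝ} (ha : 1 < a) :
    ∫ q in (-π)..π, (a - cos q)⁻¹ = 2 * π / √(a ^ 2 - 1) := by
  have hk : 0 < √((a + 1) / (a - 1)) := sqrt_pos.2 (div_pos (by linarith) (by linarith))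
  have hderiv : ∀ q ∈ Ioo (-π) π, HasDerivAt
      (fun q => 2 / √(a ^ 2 - 1) * arctan (√((a + 1) / (a - 1)) * tan (q / 2)))
      (a - cos q)⁻¹ q := fun q hq =>
    hasDerivAt_arctan_mul_tan_half ha
      (cos_pos_of_mem_Ioo ⟨by linarith [hq.1], by linarith [hq.2]⟩).ne'
  have hint : IntervalIntegrable (fun q => (a - cos q)⁻¹) volume (-π) π :=
    (continuous_const.sub continuous_cos |>.inv₀ fun q =>
      (sub_pos.2 <| (cos_le_one q).trans_lt ha).ne').intervalIntegrable _ _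
  rw [intervalIntegral.integral_eq_sub_of_hasDerivAt_of_tendsto (by linarith [pi_pos]) hderiv hint
    ((tendsto_arctan_mul_tan_half_nhdsGT_neg_pi hk).const_mul _)
    ((tendsto_arctan_mul_tan_half_nhdsLT_pi hk).const_mul _)]
  ring

lemma sub_one_add_cos_neg {z : ℝ} (hz : z < 0) (q : ℝ) : z - 1 + cos q < 0 := by
  linarith [cos_le_one q]

lemma intervalIntegrable_inv_sub_one_add_cos {z : ℝ} (hz : z < 0) (a b : ℝ) :
    IntervalIntegrable (fun q => (z - 1 + cos q)⁻¹) volume a b :=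
  ((continuous_const.add continuous_cos).inv₀ fun q =>
    (sub_one_add_cos_neg hz q).ne).intervalIntegrable _ _

lemma aF_eq_neg_inv_sqrt {z : ℝ} (hz : z < 0) : aF z = -(√(-z * (2 - z)))⁻¹ := by
  have hneg :
      ∫ q in (-π)..π, (z - 1 + cos q)⁻¹ = -∫ q in (-π)..π, (1 - z - cos q)⁻¹ := by
    rw [← intervalIntegral.integral_neg]
    congr 1 with q
    rw [← inv_neg]; ring_nf
  rw [aF, hneg, integral_inv_sub_cos (by linarith),
    show (1 - z) ^ 2 - 1 = -z * (2 - z) by ring]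
  field_simp

lemma bF_eq_neg_one_add_mul_aF {z : ℝ} (hz : z < 0) : bF z = -1 + (z - 1) * aF z := by
  have hint : ∫ q in (-π)..π, cos q / (z - 1 + cos q)
      = ∫ q in (-π)..π, (1 - (z - 1) * (z - 1 + cos q)⁻¹) := by
    refine intervalIntegral.integral_congr fun q _ => ?_
    have := (sub_one_add_cos_neg hz q).ne
    field_simp
    ring
  rw [bF, aF, hint, intervalIntegral.integral_sub intervalIntegrable_const
      ((intervalIntegrable_inv_sub_one_add_cos hz _ _).const_mul _),
    intervalIntegral.integral_const_mul, intervalIntegral.integral_const, smul_eq_mul]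
  field_simp
  ring

lemma cF_eq_neg_add_mul_aF {z : ℝ} (hz : z < 0) : cF z = -(z - 1) + (z - 1) ^ 2 * aF z := by
  have hint : ∫ q in (-π)..π, cos q ^ 2 / (z - 1 + cos q)
      = ∫ q in (-π)..π, (cos q - (z - 1) + (z - 1) ^ 2 * (z - 1 + cos q)⁻¹) := by
    refine intervalIntegral.integral_congr fun q _ => ?_
    have := (sub_one_add_cos_neg hz q).ne
    field_simp
    ring
  rw [cF, aF, hint, intervalIntegral.integral_add
      ((continuous_cos.intervalIntegrable _ _).sub intervalIntegrable_const)
      ((intervalIntegrable_inv_sub_one_add_cos hz _ _).const_mul _),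
    intervalIntegral.integral_const_mul,
    intervalIntegral.integral_sub (continuous_cos.intervalIntegrable _ _) intervalIntegrable_const,
    integral_cos, intervalIntegral.integral_const, smul_eq_mul, sin_neg, sin_pi]
  field_simp
  ring

lemma Δdet_eq_sub_mul_aF {z : ℝ} (hz : z < 0) (μ lam : ℝ) :
    Δdet μ lam z =
      1 - μ * lam + lam * (z - 1) - (lam * (z - 1) ^ 2 + μ - μ * lam * (z - 1)) * aF z := by
  rw [Δdet, bF_eq_neg_one_add_mul_aF hz, cF_eq_neg_add_mul_aF hz]
  ring

lemma isBigO_id_sqrt_neg : (fun z : ℝ => z) =O[𝓝[<] 0] fun z => √(-z) := by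
  refine IsBigO.of_bound 1 ?_
  filter_upwards [Ioo_mem_nhdsLT (show (-1 : ℝ) < 0 by norm_num)] with z hz
  rw [norm_of_nonpos hz.2.le, norm_of_nonneg (sqrt_nonneg _), one_mul]
  exact le_sqrt_of_sq_le (by nlinarith [hz.1, hz.2])

lemma isBigO_inv_sqrt_neg_mul {g : ℝ → ℝ} (hg : g =O[𝓝 0] fun z => z) :
    (fun z => (√(-z))⁻¹ * g z) =O[𝓝 0] fun z => √(-z) := by
  have h : (fun z : ℝ => (√(-z))⁻¹ * z) = fun z => -√(-z) := by
    ext z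
    rcases le_or_gt z 0 with hz | hz
    · calc (√(-z))⁻¹ * z = -((√(-z))⁻¹ * √(-z) * √(-z)) := by
            rw [mul_assoc, mul_self_sqrt (neg_nonneg.2 hz)]; ring
        _ = -√(-z) := by rw [inv_mul_mul_self]
    · simp [sqrt_eq_zero_of_nonpos (neg_nonpos.2 hz.le)]
  have := (isBigO_refl (fun z : ℝ => (√(-z))⁻¹) _).mul hg
  rwa [h, isBigO_neg_right] at this

/-- For all `μ, λ ∈ ℝ`, as `z → 0⁻`:
`Δ(μ,λ;z) = B₀ (μλ + μ + λ)(−z)^{−1/2} + (1 − λ − μλ) + O((−z)^{1/2})`,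
with `B₀ = 1/√2 > 0`. -/
theorem det_asymptotics_left_of_zero (μ lam : ℝ) :
    (0 : ℝ) < (Real.sqrt 2)⁻¹ ∧
    (fun z : ℝ => Δdet μ lam z
        - (Real.sqrt 2)⁻¹ * (μ * lam + μ + lam) * (-z) ^ (-(1/2) : ℝ)
        - (1 - lam - μ * lam))
      =O[𝓝[<] (0:ℝ)] (fun z : ℝ => (-z) ^ ((1/2) : ℝ)) := by
  refine ⟨by positivity, ?_⟩
  set Q : ℝ → ℝ := fun z => lam * (z - 1) ^ 2 + μ - μ * lam * (z - 1)
  have hQ : DifferentiableAt ℝ (fun z => Q z * (√(2 - z))⁻¹) 0 := by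
    fun_prop (disch := norm_num)
  have hΔ : ∀ z < 0, Δdet μ lam z - (√2)⁻¹ * (μ * lam + μ + lam) * (-z) ^ (-(1/2) : ℝ)
        - (1 - lam - μ * lam) =
        lam * z + (√(-z))⁻¹ * (Q z * (√(2 - z))⁻¹ - Q 0 * (√2)⁻¹) := by
    intro z hz
    have h1 : 0 < √(-z) := sqrt_pos.2 (by linarith)
    have h2 : 0 < √(2 - z) := sqrt_pos.2 (by linarith)
    rw [Δdet_eq_sub_mul_aF hz, aF_eq_neg_inv_sqrt hz, sqrt_mul (by linarith),
      rpow_neg (by linarith), ← sqrt_eq_rpow]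
    simp only [Q]
    field_simp
    ring
  simp only [← sqrt_eq_rpow]
  refine IsBigO.congr' ?_ (eventually_nhdsWithin_of_forall fun z hz => (hΔ z hz).symm)
    EventuallyEq.rfl
  exact (isBigO_id_sqrt_neg.const_mul_left lam).add
    ((isBigO_inv_sqrt_neg_mul (by simpa using hQ.isBigO_sub)).mono nhdsWithin_le_nhds)
end

section
/- Let μ, λ ∈ ℝ. If μλ − μ − λ > 0, then Δ(μ,λ;z) → +∞ as z → 2 from the right; if μλ − μ − λ < 0, then Δ(μ,λ;z) → −∞ as z → 2 from the right; and if μλ − μ − λ = 0, then Δ(μ,λ;z) → 1 − μ as z → 2 from the right (so this limit is negative when μ > 1 and positive when μ < 1). -/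
open MeasureTheory Real Filter Topology Asymptotics

/-! Dividing `cos q = (z - 1 + cos q) - (z - 1)` by the denominator gives `b = (z - 1) a - 1` and
`c = (z - 1) b`, after which the `a²` terms of `Δ` cancel and
`Δ = (μλ − μ − λ) a + 1 − λ(μ − z + 1) + λ(μ − z) · (z − 2) a`.
As `z → 2⁺`, `a(z) → ∞`: on a window of width `√(z − 2)` around `q = π` the integrand is of
order `1/(z − 2)`. On the other hand `(z − 2) a(z) → 0` by dominated convergence, since
`(z − 2)/(z − 1 + cos q)` lies in `[0, 1]` and vanishes in the limit except at `q = π`. -/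

open Set intervalIntegral

lemma sub_one_add_cos_ne_zero {z : ℝ} (hz : z ∉ Icc (0 : ℝ) 2) (q : ℝ) : z - 1 + cos q ≠ 0 :=
  fun h => hz ⟨by linarith [cos_le_one q], by linarith [neg_one_le_cos q]⟩

lemma continuous_inv_sub_one_add_cos {z : ℝ} (hz : z ∉ Icc (0 : ℝ) 2) :
    Continuous fun q => (z - 1 + cos q)⁻¹ :=
  (continuous_const.add continuous_cos).inv₀ (sub_one_add_cos_ne_zero hz)

lemma bF_eq {z : ℝ} (hz : z ∉ Icc (0 : ℝ) 2) : bF z = (z - 1) * aF z - 1 := by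
  have hpt : ∀ q, cos q / (z - 1 + cos q) = 1 - (z - 1) * (z - 1 + cos q)⁻¹ := fun q => by
    field_simp [sub_one_add_cos_ne_zero hz q]
    ring
  simp_rw [bF, aF, hpt]
  rw [integral_sub intervalIntegrable_const
      (((continuous_inv_sub_one_add_cos hz).intervalIntegrable _ _).const_mul _),
    intervalIntegral.integral_const, intervalIntegral.integral_const_mul, smul_eq_mul]
  field_simp [pi_ne_zero]
  ring

lemma cF_eq {z : ℝ} (hz : z ∉ Icc (0 : ℝ) 2) : cF z = (z - 1) * bF z := by
  have hpt : ∀ q, cos q ^ 2 / (z - 1 + cos q) = cos q - (z - 1) * (cos q / (z - 1 + cos q)) :=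
    fun q => by
      field_simp [sub_one_add_cos_ne_zero hz q]
      ring
  have hcont : Continuous fun q => cos q / (z - 1 + cos q) :=
    continuous_cos.div (continuous_const.add continuous_cos) (sub_one_add_cos_ne_zero hz)
  simp_rw [cF, bF, hpt]
  rw [integral_sub (continuous_cos.intervalIntegrable _ _)
      ((hcont.intervalIntegrable _ _).const_mul _),
    integral_cos, intervalIntegral.integral_const_mul]
  simp only [sin_neg, sub_neg_eq_add, sin_pi, add_zero]
  ring

lemma Δdet_eq (μ lam : ℝ) {z : ℝ} (hz : z ∉ Icc (0 : ℝ) 2) :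
    Δdet μ lam z = (μ * lam - μ - lam) * aF z
      + (1 - lam * (μ - z + 1) + lam * (μ - z) * ((z - 2) * aF z)) := by
  rw [Δdet, cF_eq hz, bF_eq hz]
  ring

lemma one_add_cos_pos {q : ℝ} (hq : q ∈ Ioo (-π) π) : 0 < 1 + cos q := by
  have hhalf : 0 < cos (q / 2) := cos_pos_of_mem_Ioo ⟨by linarith [hq.1], by linarith [hq.2]⟩
  have h := cos_sq (q / 2)
  rw [show 2 * (q / 2) = q by ring] at h
  nlinarith

lemma inv_sqrt_le_aF {z : ℝ} (hz : z ∈ Ioc (2 : ℝ) 3) : (3 * π)⁻¹ * (√(z - 2))⁻¹ ≤ aF z := by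
  obtain ⟨hz2, hz3⟩ := hz
  set s := √(z - 2)
  have hs_pos : 0 < s := sqrt_pos.2 (sub_pos.2 hz2)
  have hs_sq : s ^ 2 = z - 2 := sq_sqrt (by linarith)
  have hs_le : s ≤ 2 * π := by nlinarith [pi_gt_three]
  have hden_pos : ∀ q, 0 < z - 1 + cos q := fun q => by linarith [neg_one_le_cos q]
  -- near `q = π` the denominator is at most `3(z - 2)/2`, since `1 + cos q ≤ (π - q)² / 2`
  have hpt : ∀ q ∈ Icc (π - s) π, (3 * s ^ 2 / 2)⁻¹ ≤ (z - 1 + cos q)⁻¹ := by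
    rintro q ⟨hq1, hq2⟩
    refine inv_anti₀ (hden_pos q) ?_
    have hcos := one_sub_sq_div_two_le_cos (x := π - q)
    rw [cos_pi_sub] at hcos
    nlinarith
  have hcont := continuous_inv_sub_one_add_cos fun h => hz2.not_ge h.2
  have hmono : (∫ q in (π - s)..π, (z - 1 + cos q)⁻¹) ≤ ∫ q in (-π)..π, (z - 1 + cos q)⁻¹ :=
    integral_mono_interval (by linarith) (by linarith) le_rfl
      (Eventually.of_forall fun q => (inv_pos.2 (hden_pos q)).le) (hcont.intervalIntegrable _ _)
  have hconst : s * (3 * s ^ 2 / 2)⁻¹ ≤ ∫ q in (π - s)..π, (z - 1 + cos q)⁻¹ := by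
    have h := integral_mono_on (μ := volume) (by linarith) intervalIntegrable_const
      (hcont.intervalIntegrable _ _) hpt
    rwa [intervalIntegral.integral_const, smul_eq_mul, sub_sub_cancel] at h
  calc (3 * π)⁻¹ * s⁻¹ = (2 * π)⁻¹ * (s * (3 * s ^ 2 / 2)⁻¹) := by
        field_simp
    _ ≤ aF z := by
      rw [aF]
      gcongr
      exact hconst.trans hmono

lemma tendsto_aF_atTop : Tendsto aF (𝓝[>] 2) atTop := by
  have hsqrt : Tendsto (fun z : ℝ => √(z - 2)) (𝓝[>] 2) (𝓝[>] 0) := by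
    refine tendsto_nhdsWithin_iff.2 ⟨tendsto_nhdsWithin_of_tendsto_nhds
      ((by fun_prop : Continuous fun z : ℝ => √(z - 2)).tendsto' _ _ (by simp)), ?_⟩
    filter_upwards [self_mem_nhdsWithin] with z hz
    exact sqrt_pos.2 (sub_pos.2 hz)
  refine tendsto_atTop_mono' _ ?_
    ((tendsto_inv_nhdsGT_zero.comp hsqrt).const_mul_atTop (by positivity : 0 < (3 * π)⁻¹))
  filter_upwards [Ioc_mem_nhdsGT (by norm_num : (2 : ℝ) < 3)] with z hz
  exact inv_sqrt_le_aF hz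

lemma tendsto_sub_two_mul_aF : Tendsto (fun z => (z - 2) * aF z) (𝓝[>] 2) (𝓝 0) := by
  have hrw : ∀ z, (z - 2) * aF z = (2 * π)⁻¹ * ∫ q in (-π)..π, (z - 2) * (z - 1 + cos q)⁻¹ :=
    fun z => by rw [aF, intervalIntegral.integral_const_mul]; ring
  simp_rw [hrw]
  have hint : Tendsto (fun z => ∫ q in (-π)..π, (z - 2) * (z - 1 + cos q)⁻¹) (𝓝[>] 2)
      (𝓝 (∫ q in (-π)..π, (0 : ℝ))) := by
    refine tendsto_integral_filter_of_dominated_convergence (fun _ => 1) ?_ ?_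
      intervalIntegrable_const ?_
    · exact Eventually.of_forall fun z =>
        (by fun_prop : Measurable fun q => (z - 2) * (z - 1 + cos q)⁻¹).aestronglyMeasurable
    · filter_upwards [self_mem_nhdsWithin] with z hz
      refine Eventually.of_forall fun q _ => ?_
      have hz2 : 0 < z - 2 := sub_pos.2 hz
      rw [norm_mul, norm_inv, Real.norm_of_nonneg hz2.le,
        Real.norm_of_nonneg (by linarith [neg_one_le_cos q])]
      exact mul_inv_le_one_of_le₀ (by linarith [neg_one_le_cos q]) (by linarith [neg_one_le_cos q])
    · filter_upwards [Measure.ae_ne volume π] with q hq hmem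
      rw [uIoc_of_le (by linarith [pi_pos])] at hmem
      have hden : (2 : ℝ) - 1 + cos q ≠ 0 := by
        linarith [one_add_cos_pos ⟨hmem.1, lt_of_le_of_ne hmem.2 hq⟩]
      have hcont : ContinuousAt (fun z : ℝ => (z - 2) * (z - 1 + cos q)⁻¹) 2 := by
        fun_prop (disch := exact hden)
      simpa using tendsto_nhdsWithin_of_tendsto_nhds (s := Ioi 2) hcont.tendsto
  simpa using hint.const_mul (2 * π)⁻¹

/-- If `μλ − μ − λ > 0` then `Δ(μ,λ;z) → +∞` as `z → 2⁺`; if `μλ − μ − λ < 0` then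
`Δ(μ,λ;z) → −∞` as `z → 2⁺`; and if `μλ − μ − λ = 0` then `Δ(μ,λ;z) → 1 − μ` as
`z → 2⁺` (so this limit is negative when `μ > 1` and positive when `μ < 1`). -/
theorem det_limits_right_of_two (μ lam : ℝ) :
    (0 < μ * lam - μ - lam → Tendsto (fun z => Δdet μ lam z) (𝓝[>] (2:ℝ)) atTop) ∧
    (μ * lam - μ - lam < 0 → Tendsto (fun z => Δdet μ lam z) (𝓝[>] (2:ℝ)) atBot) ∧
    (μ * lam - μ - lam = 0 → Tendsto (fun z => Δdet μ lam z) (𝓝[>] (2:ℝ)) (𝓝 (1 - μ))) ∧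
    (1 < μ → 1 - μ < 0) ∧ (μ < 1 → 0 < 1 - μ) := by
  set R : ℝ → ℝ := fun z => 1 - lam * (μ - z + 1) + lam * (μ - z) * ((z - 2) * aF z)
  have hR : Tendsto R (𝓝[>] 2) (𝓝 (1 - lam * (μ - 1))) := by
    have hlin : Tendsto (fun z : ℝ => 1 - lam * (μ - z + 1)) (𝓝[>] 2) (𝓝 (1 - lam * (μ - 1))) :=
      tendsto_nhdsWithin_of_tendsto_nhds ((by fun_prop : Continuous _).tendsto' _ _ (by ring))
    have hcoef : Tendsto (fun z : ℝ => lam * (μ - z)) (𝓝[>] 2) (𝓝 (lam * (μ - 2))) :=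
      tendsto_nhdsWithin_of_tendsto_nhds ((by fun_prop : Continuous _).tendsto _)
    simpa using hlin.add (hcoef.mul tendsto_sub_two_mul_aF)
  have hΔ : (fun z => (μ * lam - μ - lam) * aF z + R z) =ᶠ[𝓝[>] 2] Δdet μ lam := by
    filter_upwards [self_mem_nhdsWithin] with z hz
    exact (Δdet_eq μ lam fun h => (not_le.2 hz) h.2).symm
  refine ⟨fun hK => ?_, fun hK => ?_, fun hK => ?_, fun h => by linarith, fun h => by linarith⟩
  · exact ((tendsto_aF_atTop.const_mul_atTop hK).atTop_add hR).congr' hΔ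
  · exact ((tendsto_aF_atTop.const_mul_atTop_of_neg hK).atBot_add hR).congr' hΔ
  · have hΔ₀ : R =ᶠ[𝓝[>] 2] Δdet μ lam := by simpa [hK] using hΔ
    convert hR.congr' hΔ₀ using 2
    linear_combination hK
end
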